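/- arXiv:2111.03996 — 2 statements merged into one kernel-verified Lean document; each statement's English description precedes it below -/
import Mathlib

section
/- Let α > 0, η > 0, M > 0, c > 0, and let f : ℝ → ℝ be a smooth 2π-periodic function with ∫₀^{2π} f(θ)dθ = 0. Suppose u_p, v_p are smooth functions on ℝ×(−∞,0], 2π-periodic in θ, solving the steady Prandtl system (c + u_p)∂_θu_p + (v_p(θ,Y) − v_p(θ,0))∂_Y u_p − ∂_YY u_p = 0, ∂_θ u_p + ∂_Y v_p = 0, with boundary condition u_p(θ,0) = α + ηf(θ) − c, such that (u_p, v_p) → (0,0) uniformly as Y → −∞, c + u_p(θ,Y) > 0 for all (θ,Y), and sup|u_p| ≤ M. Then c² = α² + (η²/2π)∫₀^{2π} f(θ)²dθ. -/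
/-!
Von Mises transformation. Write `w = c + u_p`; by compactness, periodicity and the uniform limit
`w → c > 0`, `w` lies between two positive constants on the half-strip. Let
`ψ(θ, Y) = ∫₀^Y w(θ, t) dt` be the stream function; for each `s ≤ 0` the streamline `ψ = s` is a
graph `Y = Z(θ, s)`, with `∂_s Z = 1 / w` and, since the continuity equation gives
`∂_θ ψ = v_p(θ, 0) - v_p(θ, Y)`, `∂_θ Z = (v_p(θ, Z) - v_p(θ, 0)) / w` by the implicit function
theorem. The momentum equation then says `d/dθ w(θ, Z) = ∂_YY w / w` along each streamline. Hence
`E(s) = ∫₀^{2π} w(θ, Z(θ, s))² dθ` has `E'(s) = 2 ∫₀^{2π} ∂_Y w(θ, Z) dθ` and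
`E''(s) = 2 ∫₀^{2π} d/dθ w(θ, Z) dθ = 0` by periodicity. So `E` is affine on `s < 0`; as it tends
to `2πc²` when `s → -∞` it is constant, and continuity at the wall `s = 0`, where `w = α + η f`,
gives `∫₀^{2π} (α + η f)² dθ = 2πc²`.
-/

open MeasureTheory Real Filter Set

noncomputable section

/-- Partial derivative in the first variable. -/
def pd1 (f : ℝ → ℝ → ℝ) : ℝ → ℝ → ℝ := fun x y => deriv (fun t => f t y) x

/-- Partial derivative in the second variable. -/
def pd2 (f : ℝ → ℝ → ℝ) : ℝ → ℝ → ℝ := fun x y => deriv (fun t => f x t) y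

/-- Smoothness of a function of two real variables. -/
def Smooth2 (f : ℝ → ℝ → ℝ) : Prop := ContDiff ℝ (⊤ : ℕ∞) (Function.uncurry f)

/-- `2π`-periodicity in the first variable. -/
def Periodic2 (f : ℝ → ℝ → ℝ) : Prop := ∀ x y, f (x + 2 * π) y = f x y

open Function Metric
open scoped Topology Interval

namespace Smooth2

variable {f : ℝ → ℝ → ℝ}

theorem continuous (hf : Smooth2 f) : Continuous ↿f := ContDiff.continuous hf

theorem hasDerivAt_comp_fderiv (hf : Smooth2 f) {a b : ℝ → ℝ} {a' b' t : ℝ}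
    (ha : HasDerivAt a a' t) (hb : HasDerivAt b b' t) :
    HasDerivAt (fun τ => f (a τ) (b τ)) (fderiv ℝ ↿f (a t, b t) (a', b')) t :=
  ((hf.differentiable (by simp)).differentiableAt.hasFDerivAt).comp_hasDerivAt t (ha.prodMk hb)

theorem pd1_eq_fderiv (hf : Smooth2 f) (x y : ℝ) : pd1 f x y = fderiv ℝ ↿f (x, y) (1, 0) :=
  (hf.hasDerivAt_comp_fderiv (hasDerivAt_id x) (hasDerivAt_const x y)).deriv

theorem pd2_eq_fderiv (hf : Smooth2 f) (x y : ℝ) : pd2 f x y = fderiv ℝ ↿f (x, y) (0, 1) :=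
  (hf.hasDerivAt_comp_fderiv (hasDerivAt_const y x) (hasDerivAt_id y)).deriv

theorem hasDerivAt_comp (hf : Smooth2 f) {a b : ℝ → ℝ} {a' b' t : ℝ}
    (ha : HasDerivAt a a' t) (hb : HasDerivAt b b' t) :
    HasDerivAt (fun τ => f (a τ) (b τ)) (a' * pd1 f (a t) (b t) + b' * pd2 f (a t) (b t)) t := by
  convert hf.hasDerivAt_comp_fderiv ha hb using 1
  have : ((a', b') : ℝ × ℝ) = a' • ((1 : ℝ), (0 : ℝ)) + b' • ((0 : ℝ), (1 : ℝ)) := by simp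
  rw [this, map_add, map_smul, map_smul, ← hf.pd1_eq_fderiv, ← hf.pd2_eq_fderiv, smul_eq_mul,
    smul_eq_mul]

theorem hasDerivAt_pd1 (hf : Smooth2 f) (x y : ℝ) : HasDerivAt (f · y) (pd1 f x y) x := by
  simpa using hf.hasDerivAt_comp (hasDerivAt_id x) (hasDerivAt_const x y)

theorem hasDerivAt_pd2 (hf : Smooth2 f) (x y : ℝ) : HasDerivAt (f x ·) (pd2 f x y) y := by
  simpa using hf.hasDerivAt_comp (hasDerivAt_const y x) (hasDerivAt_id y)

theorem fderiv_apply (hf : Smooth2 f) (v : ℝ × ℝ) : Smooth2 fun x y => fderiv ℝ ↿f (x, y) v :=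
  (hf.fderiv_right (mod_cast le_top)).clm_apply contDiff_const

theorem pd1 (hf : Smooth2 f) : Smooth2 (pd1 f) := by
  rw [show _root_.pd1 f = _ from funext₂ hf.pd1_eq_fderiv]
  exact hf.fderiv_apply (1, 0)

theorem pd2 (hf : Smooth2 f) : Smooth2 (pd2 f) := by
  rw [show _root_.pd2 f = _ from funext₂ hf.pd2_eq_fderiv]
  exact hf.fderiv_apply (0, 1)

theorem const_add (hf : Smooth2 f) (c : ℝ) : Smooth2 fun x y => c + f x y :=
  contDiff_const.add hf

theorem const_mul (hf : Smooth2 f) (c : ℝ) : Smooth2 fun x y => c * f x y :=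
  contDiff_const.mul hf

end Smooth2

theorem pd1_const_add (c : ℝ) (f : ℝ → ℝ → ℝ) : pd1 (fun x y => c + f x y) = pd1 f := by
  ext x y; exact deriv_const_add c

theorem pd2_const_add (c : ℝ) (f : ℝ → ℝ → ℝ) : pd2 (fun x y => c + f x y) = pd2 f := by
  ext x y; exact deriv_const_add c

theorem Periodic2.exists_mem_Icc {f : ℝ → ℝ → ℝ} (hf : Periodic2 f) (x y : ℝ) :
    ∃ x' ∈ Icc 0 (2 * π), f x y = f x' y := by
  obtain ⟨x', hx', h⟩ := Periodic.exists_mem_Ico₀ (f := (f · y)) (fun t => hf t y) two_pi_pos x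
  exact ⟨x', Ico_subset_Icc_self hx', h⟩

theorem exists_bounds_of_tendstoUniformly {w : ℝ → ℝ → ℝ} {c : ℝ} (hw : Continuous ↿w)
    (hper : Periodic2 w) (hc : 0 < c)
    (hlim : TendstoUniformly (fun Y θ => w θ Y) (fun _ => c) atBot)
    (hpos : ∀ θ, ∀ Y ≤ 0, 0 < w θ Y) :
    ∃ m > 0, ∃ K, ∀ θ, ∀ Y ≤ 0, m ≤ w θ Y ∧ w θ Y ≤ K := by
  obtain ⟨Y₁, hY₁⟩ := eventually_atBot.mp (tendstoUniformly_iff.mp hlim (c / 2) (by positivity))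
  set S := Icc 0 (2 * π) ×ˢ Icc (min Y₁ 0) 0
  have hS : IsCompact S := isCompact_Icc.prod isCompact_Icc
  have hS₀ : S.Nonempty := ⟨(0, 0), ⟨le_rfl, two_pi_pos.le⟩, min_le_right _ _, le_rfl⟩
  obtain ⟨p, hp, hp_min⟩ := hS.exists_isMinOn hS₀ hw.continuousOn
  obtain ⟨q, -, hq_max⟩ := hS.exists_isMaxOn hS₀ hw.continuousOn
  refine ⟨min (c / 2) (w p.1 p.2), lt_min (by positivity) (hpos _ _ hp.2.2),
    max (3 * c / 2) (w q.1 q.2), fun θ Y hY => ?_⟩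
  rcases le_or_gt Y (min Y₁ 0) with hY₀ | hY₀
  · have h := hY₁ Y (hY₀.trans (min_le_left _ _)) θ
    rw [Real.dist_eq, abs_lt] at h
    constructor
    · exact (min_le_left _ _).trans (by linarith)
    · exact le_trans (by linarith) (le_max_left _ _)
  · obtain ⟨θ', hθ', hθ⟩ := hper.exists_mem_Icc θ Y
    have hmem : (θ', Y) ∈ S := ⟨hθ', hY₀.le, hY⟩
    rw [hθ]
    exact ⟨(min_le_right _ _).trans (hp_min hmem), (hq_max hmem).trans (le_max_right _ _)⟩

theorem hasDerivAt_implicit {F F₁ F₂ : ℝ → ℝ → ℝ} {g : ℝ → ℝ} {x : ℝ}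
    (hF₁ : ∀ᶠ p in 𝓝 (x, g x), HasDerivAt (F · p.2) (F₁ p.1 p.2) p.1)
    (hF₂ : ∀ᶠ p in 𝓝 (x, g x), HasDerivAt (F p.1 ·) (F₂ p.1 p.2) p.2)
    (hF₁c : ContinuousAt ↿F₁ (x, g x)) (hF₂c : ContinuousAt ↿F₂ (x, g x))
    (hF₂x : F₂ x (g x) ≠ 0) (hg : ContinuousAt g x)
    (hFg : ∀ᶠ y in 𝓝 x, F y (g y) = F x (g x)) :
    HasDerivAt g (-F₁ x (g x) / F₂ x (g x)) x := by
  let e : ℝ ≃L[ℝ] (ℝ →L[ℝ] ℝ) := ContinuousLinearMap.toSpanSingletonCLE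
  have df₁ : ∀ᶠ p in 𝓝 (x, g x), HasFDerivAt (F · p.2) (e (F₁ p.1 p.2)) p.1 :=
    hF₁.mono fun p hp => hp.hasFDerivAt
  have df₂ : ∀ᶠ p in 𝓝 (x, g x), HasFDerivAt (F p.1 ·) (e (F₂ p.1 p.2)) p.2 :=
    hF₂.mono fun p hp => hp.hasFDerivAt
  have cf₁ : ContinuousAt ↿(fun a b => e (F₁ a b)) (x, g x) := e.continuous.continuousAt.comp hF₁c
  have cf₂ : ContinuousAt ↿(fun a b => e (F₂ a b)) (x, g x) := e.continuous.continuousAt.comp hF₂c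
  have he₂ : e (F₂ x (g x)) = ContinuousLinearEquiv.unitsEquivAut ℝ (Units.mk0 _ hF₂x) := by
    ext; simp [e]
  have if₂ : (e (F₂ (x, g x).1 (x, g x).2)).IsInvertible := ⟨_, he₂.symm⟩
  have hφ := hasStrictFDerivAt_implicitFunctionOfBivariate df₁ df₂ cf₁ cf₂ if₂
  have hφg : implicitFunctionOfBivariate df₁ df₂ cf₁ cf₂ if₂ =ᶠ[𝓝 x] g := by
    filter_upwards [(continuousAt_id.prodMk hg).eventually
      (eventually_apply_eq_iff_implicitFunctionOfBivariate df₁ df₂ cf₁ cf₂ if₂), hFg]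
      with y hiff hy using hiff.mp hy
  refine (hφ.hasFDerivAt.hasDerivAt.congr_of_eventuallyEq hφg.symm).congr_deriv ?_
  simp [he₂, e, ContinuousLinearMap.inverse_equiv, div_eq_mul_inv]

theorem hasDerivAt_intervalIntegral_of_continuousOn {F F' : ℝ → ℝ → ℝ} {x₀ r a b : ℝ}
    (hr : 0 < r) (hF : ∀ x ∈ ball x₀ r, ContinuousOn (F x) [[a, b]])
    (hF' : ContinuousOn ↿F' (closedBall x₀ r ×ˢ [[a, b]]))
    (hderiv : ∀ x ∈ ball x₀ r, ∀ t ∈ [[a, b]], HasDerivAt (F · t) (F' x t) x) :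
    HasDerivAt (fun x => ∫ t in a..b, F x t) (∫ t in a..b, F' x₀ t) x₀ := by
  obtain ⟨C, hC⟩ :=
    ((isCompact_closedBall x₀ r).prod isCompact_uIcc).exists_bound_of_continuousOn hF'
  have hF'₀ : ContinuousOn (F' x₀) [[a, b]] :=
    hF'.comp (continuousOn_const.prodMk continuousOn_id)
      fun t ht => ⟨mem_closedBall_self hr.le, ht⟩
  refine (intervalIntegral.hasDerivAt_integral_of_dominated_loc_of_deriv_le
    (bound := fun _ => C) (ball_mem_nhds x₀ hr) ?_ (hF x₀ (mem_ball_self hr)).intervalIntegrable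
    ((hF'₀.aestronglyMeasurable measurableSet_uIcc).mono_set uIoc_subset_uIcc)
    ?_ intervalIntegrable_const ?_).2
  · filter_upwards [ball_mem_nhds x₀ hr] with x hx
    exact ((hF x hx).aestronglyMeasurable measurableSet_uIcc).mono_set uIoc_subset_uIcc
  · exact .of_forall fun t ht x hx =>
      hC (x, t) ⟨ball_subset_closedBall hx, uIoc_subset_uIcc ht⟩
  · exact .of_forall fun t ht x hx => hderiv x hx t (uIoc_subset_uIcc ht)

theorem eq_of_tendsto_atBot_of_hasDerivAt_hasDerivAt_zero {h g : ℝ → ℝ} {a L : ℝ}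
    (hh : ∀ t < a, HasDerivAt h (g t) t) (hg : ∀ t < a, HasDerivAt g 0 t)
    (hL : Tendsto h atBot (𝓝 L)) (ha : ContinuousWithinAt h (Iio a) a) : h a = L := by
  set s := a - 1
  have hs : s < a := by linarith
  have const_of_deriv {φ φ' : ℝ → ℝ} (hφ : ∀ t < a, HasDerivAt φ (φ' t) t)
      (hφ' : ∀ t < a, φ' t = 0) : ∀ t < a, φ t = φ s := fun t ht =>
    isOpen_Iio.is_const_of_deriv_eq_zero isPreconnected_Iio
      (fun x hx => (hφ x hx).differentiableAt.differentiableWithinAt)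
      (fun x hx => (hφ x hx).deriv.trans (hφ' x hx)) ht hs
  have hg_const : ∀ t < a, g t = g s := const_of_deriv hg fun _ _ => rfl
  have h_affine : ∀ t < a, h t - g s * t = h s - g s * s :=
    const_of_deriv (fun t ht => (hh t ht).sub ((hasDerivAt_id t).const_mul (g s)))
      fun t ht => by simp [hg_const t ht]
  have hg_zero : g s = 0 := by
    have h_diff : Tendsto (fun t => h t - h (t - 1)) atBot (𝓝 (L - L)) :=
      hL.sub (hL.comp (tendsto_atBot_add_const_right _ (-1) tendsto_id))
    have : Tendsto (fun _ : ℝ => g s) atBot (𝓝 (L - L)) := by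
      refine h_diff.congr' ?_
      filter_upwards [eventually_lt_atBot a] with t ht
      linarith [h_affine t ht, h_affine (t - 1) (by linarith)]
    simpa using tendsto_nhds_unique tendsto_const_nhds this
  have h_const : ∀ t < a, h t = h s := fun t ht => by simpa [hg_zero] using h_affine t ht
  have hL_eq : h s = L :=
    tendsto_nhds_unique tendsto_const_nhds <| hL.congr' <|
      (eventually_lt_atBot a).mono h_const
  exact tendsto_nhds_unique ha.tendsto <| tendsto_const_nhds.congr' <|
    eventually_nhdsWithin_of_forall fun t ht => (h_const t ht).trans hL_eq |>.symm

theorem integral_const_add_mul_sq {f : ℝ → ℝ} (hf : Continuous f) (α η a b : ℝ) :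
    ∫ x in a..b, (α + η * f x) ^ 2 =
      (b - a) * α ^ 2 + 2 * α * η * (∫ x in a..b, f x) + η ^ 2 * ∫ x in a..b, f x ^ 2 := by
  have hexp : ∀ x, (α + η * f x) ^ 2 = α ^ 2 + (2 * α * η) * f x + η ^ 2 * f x ^ 2 :=
    fun x => by ring
  have hint {g : ℝ → ℝ} (hg : Continuous g) : IntervalIntegrable g volume a b :=
    hg.intervalIntegrable a b
  simp only [hexp]
  rw [intervalIntegral.integral_add (hint (by fun_prop)) (hint (by fun_prop)),
    intervalIntegral.integral_add intervalIntegrable_const (hint (by fun_prop)),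
    intervalIntegral.integral_const, intervalIntegral.integral_const_mul,
    intervalIntegral.integral_const_mul, smul_eq_mul]

def streamFunction (w : ℝ → ℝ → ℝ) (θ Y : ℝ) : ℝ := ∫ t in (0 : ℝ)..Y, w θ t

/-- `Z(θ, s)`: for `s ≤ 0`, the depth `Y ≤ 0` at which `ψ(θ, Y) = s`; a junk value for `s > 0`. -/
def streamline (w : ℝ → ℝ → ℝ) (θ s : ℝ) : ℝ := invFunOn (streamFunction w θ) (Iic 0) s

section StreamFunction

variable {w : ℝ → ℝ → ℝ} {m K θ s : ℝ}

@[simp] theorem streamFunction_zero (w : ℝ → ℝ → ℝ) (θ : ℝ) : streamFunction w θ 0 = 0 :=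
  intervalIntegral.integral_same

theorem continuous_streamFunction (hw : Continuous ↿w) : Continuous ↿(streamFunction w) :=
  intervalIntegral.continuous_parametric_primitive_of_continuous hw

theorem hasDerivAt_streamFunction_snd (hw : Continuous ↿w) (θ Y : ℝ) :
    HasDerivAt (streamFunction w θ) (w θ Y) Y :=
  ((hw.uncurry_left θ).integral_hasStrictDerivAt 0 Y).hasDerivAt

theorem Periodic2.streamFunction (hw : Periodic2 w) : Periodic2 (streamFunction w) :=
  fun θ Y => by
    have h : ∀ t, w (θ + 2 * π) t = w θ t := hw θ
    simp only [_root_.streamFunction, h]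

theorem streamFunction_sub (hw : Continuous ↿w) (θ Y Y' : ℝ) :
    streamFunction w θ Y - streamFunction w θ Y' = ∫ t in Y'..Y, w θ t :=
  intervalIntegral.integral_interval_sub_left ((hw.uncurry_left θ).intervalIntegrable _ _)
    ((hw.uncurry_left θ).intervalIntegrable _ _)

theorem mul_sub_le_streamFunction_sub (hw : Continuous ↿w) (hmw : ∀ θ, ∀ Y ≤ 0, m ≤ w θ Y)
    {Y Y' : ℝ} (hYY' : Y' ≤ Y) (hY : Y ≤ 0) :
    m * (Y - Y') ≤ streamFunction w θ Y - streamFunction w θ Y' := by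
  rw [streamFunction_sub hw]
  simpa [mul_comm] using intervalIntegral.integral_mono_on hYY' intervalIntegrable_const
    ((hw.uncurry_left θ).intervalIntegrable (μ := volume) _ _) fun t ht => hmw θ t (ht.2.trans hY)

theorem streamFunction_sub_le_mul_sub (hw : Continuous ↿w) (hwK : ∀ θ, ∀ Y ≤ 0, w θ Y ≤ K)
    {Y Y' : ℝ} (hYY' : Y' ≤ Y) (hY : Y ≤ 0) :
    streamFunction w θ Y - streamFunction w θ Y' ≤ K * (Y - Y') := by
  rw [streamFunction_sub hw]
  simpa [mul_comm] using intervalIntegral.integral_mono_on hYY'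
    ((hw.uncurry_left θ).intervalIntegrable (μ := volume) _ _) intervalIntegrable_const
    fun t ht => hwK θ t (ht.2.trans hY)

theorem mul_abs_sub_le_abs_streamFunction_sub (hw : Continuous ↿w) (hm : 0 ≤ m)
    (hmw : ∀ θ, ∀ Y ≤ 0, m ≤ w θ Y) {Y Y' : ℝ} (hY : Y ≤ 0) (hY' : Y' ≤ 0) :
    m * |Y - Y'| ≤ |streamFunction w θ Y - streamFunction w θ Y'| := by
  rcases le_total Y' Y with h | h
  · have := mul_sub_le_streamFunction_sub (θ := θ) hw hmw h hY
    rw [abs_of_nonneg (sub_nonneg.mpr h), abs_of_nonneg (by nlinarith)]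
    exact this
  · have := mul_sub_le_streamFunction_sub (θ := θ) hw hmw h hY'
    rw [abs_of_nonpos (sub_nonpos.mpr h), abs_of_nonpos (by nlinarith)]
    linarith

theorem strictMonoOn_streamFunction (hw : Continuous ↿w) (hm : 0 < m)
    (hmw : ∀ θ, ∀ Y ≤ 0, m ≤ w θ Y) : StrictMonoOn (streamFunction w θ) (Iic 0) :=
  fun _ _ _ hY hY'Y => by
    nlinarith [mul_sub_le_streamFunction_sub (θ := θ) hw hmw hY'Y.le hY]

theorem exists_streamFunction_eq (hw : Continuous ↿w) (hm : 0 < m)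
    (hmw : ∀ θ, ∀ Y ≤ 0, m ≤ w θ Y) (hs : s ≤ 0) : ∃ Y ∈ Iic 0, streamFunction w θ Y = s := by
  have hsm : s / m ≤ 0 := div_nonpos_of_nonpos_of_nonneg hs hm.le
  have hlow : streamFunction w θ (s / m) ≤ s := by
    have := mul_sub_le_streamFunction_sub (θ := θ) hw hmw hsm le_rfl
    rw [streamFunction_zero, zero_sub, mul_neg, mul_div_cancel₀ s hm.ne'] at this
    linarith
  obtain ⟨Y, hY, hYs⟩ := intermediate_value_Icc hsm
    ((continuous_streamFunction hw).uncurry_left θ).continuousOn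
    (show s ∈ Icc _ _ from ⟨hlow, by simpa using hs⟩)
  exact ⟨Y, hY.2, hYs⟩

theorem streamline_nonpos (hw : Continuous ↿w) (hm : 0 < m) (hmw : ∀ θ, ∀ Y ≤ 0, m ≤ w θ Y)
    (hs : s ≤ 0) : streamline w θ s ≤ 0 :=
  (invFunOn_pos (exists_streamFunction_eq hw hm hmw hs)).1

theorem streamFunction_streamline (hw : Continuous ↿w) (hm : 0 < m)
    (hmw : ∀ θ, ∀ Y ≤ 0, m ≤ w θ Y) (hs : s ≤ 0) :
    streamFunction w θ (streamline w θ s) = s :=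
  (invFunOn_pos (exists_streamFunction_eq hw hm hmw hs)).2

theorem streamline_zero (hw : Continuous ↿w) (hm : 0 < m) (hmw : ∀ θ, ∀ Y ≤ 0, m ≤ w θ Y)
    (θ : ℝ) : streamline w θ 0 = 0 := by
  simpa [streamline] using (strictMonoOn_streamFunction (θ := θ) hw hm hmw).injOn.leftInvOn_invFunOn
    (mem_Iic.2 le_rfl : (0 : ℝ) ∈ Iic 0)

theorem streamline_neg (hw : Continuous ↿w) (hm : 0 < m) (hmw : ∀ θ, ∀ Y ≤ 0, m ≤ w θ Y)
    (hs : s < 0) : streamline w θ s < 0 := by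
  refine (streamline_nonpos hw hm hmw hs.le).lt_of_ne fun h => hs.ne ?_
  rw [← streamFunction_streamline (θ := θ) hw hm hmw hs.le, h, streamFunction_zero]

theorem mul_streamline_le (hw : Continuous ↿w) (hm : 0 < m) (hmw : ∀ θ, ∀ Y ≤ 0, m ≤ w θ Y)
    (hwK : ∀ θ, ∀ Y ≤ 0, w θ Y ≤ K) (hs : s ≤ 0) : K * streamline w θ s ≤ s := by
  have := streamFunction_sub_le_mul_sub (θ := θ) hw hwK
    (streamline_nonpos (θ := θ) hw hm hmw hs) le_rfl
  rw [streamFunction_zero, streamFunction_streamline hw hm hmw hs] at this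
  linarith

theorem tendsto_streamline_atBot (hw : Continuous ↿w) (hm : 0 < m)
    (hmw : ∀ θ, ∀ Y ≤ 0, m ≤ w θ Y) (hwK : ∀ θ, ∀ Y ≤ 0, w θ Y ≤ K) (hK : 0 < K) :
    Tendsto (streamline w θ) atBot atBot := by
  refine tendsto_atBot_mono' _ ?_ (tendsto_id.atBot_div_const hK)
  filter_upwards [eventually_le_atBot 0] with s hs
  rw [id, le_div_iff₀ hK, mul_comm]
  exact mul_streamline_le hw hm hmw hwK hs

theorem mul_abs_streamline_sub_le (hw : Continuous ↿w) (hm : 0 < m)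
    (hmw : ∀ θ, ∀ Y ≤ 0, m ≤ w θ Y) {Y : ℝ} (hs : s ≤ 0) (hY : Y ≤ 0) :
    m * |streamline w θ s - Y| ≤ |s - streamFunction w θ Y| := by
  simpa only [streamFunction_streamline hw hm hmw hs] using
    mul_abs_sub_le_abs_streamFunction_sub (θ := θ) hw hm.le hmw
      (streamline_nonpos (θ := θ) hw hm hmw hs) hY

theorem Periodic2.streamline (hw : Periodic2 w) : Periodic2 (streamline w) := fun θ s => by
  simp only [_root_.streamline, funext (hw.streamFunction θ)]

theorem continuousOn_streamline (hw : Continuous ↿w) (hm : 0 < m)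
    (hmw : ∀ θ, ∀ Y ≤ 0, m ≤ w θ Y) : ContinuousOn ↿(streamline w) (univ ×ˢ Iic 0) := by
  rintro ⟨θ₀, s₀⟩ ⟨-, hs₀⟩
  have hψ : Continuous fun p : ℝ × ℝ => |p.2 - streamFunction w p.1 (streamline w θ₀ s₀)| / m :=
    ((continuous_snd.sub ((continuous_streamFunction hw).comp
      (continuous_fst.prodMk continuous_const))).abs).div_const m
  have hψ₀ := hψ.continuousWithinAt (s := univ ×ˢ Iic 0) (x := (θ₀, s₀))
  simp only [ContinuousWithinAt, streamFunction_streamline hw hm hmw hs₀, sub_self, abs_zero,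
    zero_div] at hψ₀
  rw [ContinuousWithinAt, tendsto_iff_dist_tendsto_zero]
  refine squeeze_zero' (.of_forall fun _ => dist_nonneg) ?_ hψ₀
  filter_upwards [self_mem_nhdsWithin] with p hp
  rw [Real.dist_eq, le_div_iff₀ hm, mul_comm]
  exact mul_abs_streamline_sub_le hw hm hmw hp.2 (streamline_nonpos hw hm hmw hs₀)

theorem continuous_streamline_fst (hw : Continuous ↿w) (hm : 0 < m)
    (hmw : ∀ θ, ∀ Y ≤ 0, m ≤ w θ Y) (hs : s ≤ 0) : Continuous (streamline w · s) :=
  (continuousOn_streamline hw hm hmw).comp_continuous (Continuous.prodMk_left s)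
    fun _ => ⟨trivial, hs⟩

theorem continuousOn_streamline_snd (hw : Continuous ↿w) (hm : 0 < m)
    (hmw : ∀ θ, ∀ Y ≤ 0, m ≤ w θ Y) : ContinuousOn (streamline w θ) (Iic 0) :=
  (continuousOn_streamline hw hm hmw).comp (Continuous.prodMk_right θ).continuousOn
    fun _ hs => ⟨trivial, hs⟩

theorem ContinuousOn.comp_streamline {G : ℝ → ℝ → ℝ} (hG : ContinuousOn ↿G (univ ×ˢ Iic 0))
    (hw : Continuous ↿w) (hm : 0 < m) (hmw : ∀ θ, ∀ Y ≤ 0, m ≤ w θ Y) :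
    ContinuousOn (fun p : ℝ × ℝ => G p.2 (streamline w p.2 p.1)) (Iic 0 ×ˢ univ) :=
  hG.comp (continuousOn_snd.prodMk ((continuousOn_streamline hw hm hmw).comp
    continuous_swap.continuousOn fun _ hp => ⟨trivial, hp.1⟩))
    fun _ hp => ⟨trivial, streamline_nonpos hw hm hmw hp.1⟩

theorem hasDerivAt_streamline_snd (hw : Continuous ↿w) (hm : 0 < m)
    (hmw : ∀ θ, ∀ Y ≤ 0, m ≤ w θ Y) (hs : s < 0) :
    HasDerivAt (streamline w θ) (w θ (streamline w θ s))⁻¹ s :=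
  .of_local_left_inverse
    ((continuousOn_streamline_snd hw hm hmw).continuousAt (Iic_mem_nhds hs))
    (hasDerivAt_streamFunction_snd hw θ _)
    (hm.trans_le (hmw θ _ (streamline_nonpos hw hm hmw hs.le))).ne'
    (eventually_lt_nhds hs |>.mono fun _ h => streamFunction_streamline hw hm hmw h.le)

theorem hasDerivAt_streamline_fst {v : ℝ → ℝ → ℝ} (hw : Continuous ↿w) (hv : Continuous ↿v)
    (hm : 0 < m) (hmw : ∀ θ, ∀ Y ≤ 0, m ≤ w θ Y)
    (hψθ : ∀ θ, ∀ Y ≤ 0, HasDerivAt (streamFunction w · Y) (v θ 0 - v θ Y) θ) (hs : s < 0) :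
    HasDerivAt (streamline w · s)
      ((v θ (streamline w θ s) - v θ 0) / w θ (streamline w θ s)) θ := by
  have hZ := streamline_neg (θ := θ) hw hm hmw hs
  refine (hasDerivAt_implicit (F := streamFunction w) (F₁ := fun θ Y => v θ 0 - v θ Y)
    (F₂ := w) ?_ (.of_forall fun p => hasDerivAt_streamFunction_snd hw p.1 p.2) ?_
    hw.continuousAt (hm.trans_le (hmw θ _ hZ.le)).ne'
    (continuous_streamline_fst hw hm hmw hs.le).continuousAt
    (.of_forall fun θ' => by simp only [streamFunction_streamline hw hm hmw hs.le])).congr_deriv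
    (by ring)
  · filter_upwards [continuous_snd.continuousAt.eventually (eventually_lt_nhds hZ)] with p hp
    exact hψθ p.1 p.2 hp.le
  · exact ((hv.comp (continuous_fst.prodMk continuous_const)).sub hv).continuousAt

end StreamFunction

section VonMises

variable {w v : ℝ → ℝ → ℝ} {m θ s : ℝ}

theorem hasDerivAt_streamFunction_fst (hw : Smooth2 w) (hv : Smooth2 v)
    (hdiv : ∀ θ, ∀ Y ≤ 0, pd1 w θ Y + pd2 v θ Y = 0) {Y : ℝ} (hY : Y ≤ 0) :
    HasDerivAt (streamFunction w · Y) (v θ 0 - v θ Y) θ := by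
  have h := hasDerivAt_intervalIntegral_of_continuousOn (F := w) (F' := pd1 w) (x₀ := θ)
    (a := 0) (b := Y) one_pos (fun x _ => (hw.continuous.uncurry_left x).continuousOn)
    hw.pd1.continuous.continuousOn fun x _ t _ => hw.hasDerivAt_pd1 x t
  have hpd2v : ∀ t, HasDerivAt (v θ) (pd2 v θ t) t := hv.hasDerivAt_pd2 θ
  refine h.congr_deriv ?_
  rw [intervalIntegral.integral_congr (g := fun t => -pd2 v θ t) fun t ht => ?_,
    intervalIntegral.integral_neg, intervalIntegral.integral_eq_sub_of_hasDerivAt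
      (fun t _ => hpd2v t) ((hv.pd2.continuous.uncurry_left θ).intervalIntegrable _ _)]
  · ring
  · rw [uIcc_of_ge hY] at ht
    exact eq_neg_of_add_eq_zero_left (hdiv θ t ht.2)

theorem hasDerivAt_along_streamline (hw : Smooth2 w) (hv : Smooth2 v) (hm : 0 < m)
    (hmw : ∀ θ, ∀ Y ≤ 0, m ≤ w θ Y) (hdiv : ∀ θ, ∀ Y ≤ 0, pd1 w θ Y + pd2 v θ Y = 0)
    (hmom : ∀ θ, ∀ Y ≤ 0,
      w θ Y * pd1 w θ Y + (v θ Y - v θ 0) * pd2 w θ Y - pd2 (pd2 w) θ Y = 0)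
    (hs : s < 0) :
    HasDerivAt (fun θ => w θ (streamline w θ s))
      (pd2 (pd2 w) θ (streamline w θ s) / w θ (streamline w θ s)) θ := by
  have hZ := streamline_nonpos (θ := θ) hw.continuous hm hmw hs.le
  have hwZ : w θ (streamline w θ s) ≠ 0 := (hm.trans_le (hmw θ _ hZ)).ne'
  have hZθ := hasDerivAt_streamline_fst (θ := θ) hw.continuous hv.continuous hm hmw
    (fun _ _ hY => hasDerivAt_streamFunction_fst hw hv hdiv hY) hs
  refine (hw.hasDerivAt_comp (hasDerivAt_id θ) hZθ).congr_deriv ?_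
  simp only [id]
  field_simp
  linarith [hmom θ _ hZ]

theorem integral_along_streamline_eq_zero (hw : Smooth2 w) (hv : Smooth2 v) (hper : Periodic2 w)
    (hm : 0 < m) (hmw : ∀ θ, ∀ Y ≤ 0, m ≤ w θ Y)
    (hdiv : ∀ θ, ∀ Y ≤ 0, pd1 w θ Y + pd2 v θ Y = 0)
    (hmom : ∀ θ, ∀ Y ≤ 0,
      w θ Y * pd1 w θ Y + (v θ Y - v θ 0) * pd2 w θ Y - pd2 (pd2 w) θ Y = 0)
    (hs : s < 0) :
    ∫ θ in (0 : ℝ)..2 * π, pd2 (pd2 w) θ (streamline w θ s) / w θ (streamline w θ s) = 0 := by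
  have hZ := continuous_streamline_fst hw.continuous hm hmw hs.le
  have hcont : Continuous fun θ => pd2 (pd2 w) θ (streamline w θ s) / w θ (streamline w θ s) :=
    (hw.pd2.pd2.continuous.comp (continuous_id.prodMk hZ)).div
      (hw.continuous.comp (continuous_id.prodMk hZ))
      fun θ => (hm.trans_le (hmw θ _ (streamline_nonpos hw.continuous hm hmw hs.le))).ne'
  rw [intervalIntegral.integral_eq_sub_of_hasDerivAt
    (fun θ _ => hasDerivAt_along_streamline hw hv hm hmw hdiv hmom hs)
    (hcont.intervalIntegrable _ _)]
  have hZper : streamline w (2 * π) s = streamline w 0 s := by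
    simpa using hper.streamline 0 s
  have hwper : w (2 * π) (streamline w 0 s) = w 0 (streamline w 0 s) := by
    simpa using hper 0 (streamline w 0 s)
  rw [hZper, hwper, sub_self]

theorem hasDerivAt_integral_along_streamline {G : ℝ → ℝ → ℝ} (hG : Smooth2 G)
    (hw : Continuous ↿w) (hm : 0 < m) (hmw : ∀ θ, ∀ Y ≤ 0, m ≤ w θ Y) (hs : s < 0) :
    HasDerivAt (fun s => ∫ θ in (0 : ℝ)..2 * π, G θ (streamline w θ s))
      (∫ θ in (0 : ℝ)..2 * π, pd2 G θ (streamline w θ s) / w θ (streamline w θ s)) s := by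
  have hball : closedBall s (-s / 2) ⊆ Iio 0 := fun x hx => by
    rw [mem_closedBall, Real.dist_eq, abs_le] at hx
    exact (by linarith : x < 0)
  have hG' : ContinuousOn ↿(fun θ Y => pd2 G θ Y / w θ Y) (univ ×ˢ Iic 0) :=
    hG.pd2.continuous.continuousOn.div hw.continuousOn
      fun p hp => (hm.trans_le (hmw p.1 p.2 hp.2)).ne'
  refine hasDerivAt_intervalIntegral_of_continuousOn (F := fun x θ => G θ (streamline w θ x))
    (F' := fun x θ => pd2 G θ (streamline w θ x) / w θ (streamline w θ x)) (r := -s / 2)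
    (by linarith) (fun x hx => ?_)
    ((hG'.comp_streamline hw hm hmw).mono (prod_mono
      (hball.trans Iio_subset_Iic_self) (subset_univ _))) fun x hx θ _ => ?_
  · exact (hG.continuous.comp (continuous_id.prodMk
      (continuous_streamline_fst hw hm hmw (hball (ball_subset_closedBall hx)).le))).continuousOn
  · exact ((hG.hasDerivAt_pd2 θ _).comp x
      (hasDerivAt_streamline_snd hw hm hmw (hball (ball_subset_closedBall hx)))).congr_deriv
      (div_eq_mul_inv _ _).symm

end VonMises

section Energy

variable {w v : ℝ → ℝ → ℝ} {m K c s : ℝ}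

def streamlineEnergy (w : ℝ → ℝ → ℝ) (s : ℝ) : ℝ :=
  ∫ θ in (0 : ℝ)..2 * π, w θ (streamline w θ s) ^ 2

theorem hasDerivAt_streamlineEnergy (hw : Smooth2 w) (hm : 0 < m)
    (hmw : ∀ θ, ∀ Y ≤ 0, m ≤ w θ Y) (hs : s < 0) :
    HasDerivAt (streamlineEnergy w) (∫ θ in (0 : ℝ)..2 * π, 2 * pd2 w θ (streamline w θ s)) s := by
  refine (hasDerivAt_integral_along_streamline (G := fun θ Y => w θ Y ^ 2) (hw.pow 2)
    hw.continuous hm hmw hs).congr_deriv (intervalIntegral.integral_congr fun θ _ => ?_)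
  have hwZ : w θ (streamline w θ s) ≠ 0 :=
    (hm.trans_le (hmw θ _ (streamline_nonpos hw.continuous hm hmw hs.le))).ne'
  have hpd2 : pd2 (fun θ Y => w θ Y ^ 2) = fun θ Y => 2 * w θ Y * pd2 w θ Y :=
    funext₂ fun θ Y => by simpa [pd2] using ((hw.hasDerivAt_pd2 θ Y).fun_pow 2).deriv
  rw [hpd2]
  field_simp

theorem hasDerivAt_integral_pd2_along_streamline (hw : Smooth2 w) (hv : Smooth2 v)
    (hper : Periodic2 w) (hm : 0 < m) (hmw : ∀ θ, ∀ Y ≤ 0, m ≤ w θ Y)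
    (hdiv : ∀ θ, ∀ Y ≤ 0, pd1 w θ Y + pd2 v θ Y = 0)
    (hmom : ∀ θ, ∀ Y ≤ 0,
      w θ Y * pd1 w θ Y + (v θ Y - v θ 0) * pd2 w θ Y - pd2 (pd2 w) θ Y = 0)
    (hs : s < 0) :
    HasDerivAt (fun s => ∫ θ in (0 : ℝ)..2 * π, 2 * pd2 w θ (streamline w θ s)) 0 s := by
  have hpd2 : pd2 (fun θ Y => 2 * pd2 w θ Y) = fun θ Y => 2 * pd2 (pd2 w) θ Y :=
    funext₂ fun θ Y => ((hw.pd2.hasDerivAt_pd2 θ Y).const_mul 2).deriv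
  refine (hasDerivAt_integral_along_streamline (G := fun θ Y => 2 * pd2 w θ Y)
    (hw.pd2.const_mul 2) hw.continuous hm hmw hs).congr_deriv ?_
  simp only [hpd2, mul_div_assoc, intervalIntegral.integral_const_mul,
    integral_along_streamline_eq_zero hw hv hper hm hmw hdiv hmom hs, mul_zero]

theorem tendsto_streamlineEnergy {l : Filter ℝ} [l.IsCountablyGenerated] {g : ℝ → ℝ}
    (hw : Continuous ↿w) (hm : 0 < m) (hmw : ∀ θ, ∀ Y ≤ 0, m ≤ w θ Y)
    (hwK : ∀ θ, ∀ Y ≤ 0, w θ Y ≤ K) (hl : ∀ᶠ s in l, s ≤ 0)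
    (hg : ∀ θ, Tendsto (fun s => w θ (streamline w θ s)) l (𝓝 (g θ))) :
    Tendsto (streamlineEnergy w) l (𝓝 (∫ θ in (0 : ℝ)..2 * π, g θ ^ 2)) := by
  refine intervalIntegral.tendsto_integral_filter_of_dominated_convergence (fun _ => K ^ 2)
    (hl.mono fun s hs => ?_) (hl.mono fun s hs => .of_forall fun θ _ => ?_)
    intervalIntegrable_const (.of_forall fun θ _ => (hg θ).pow 2)
  · exact ((hw.comp (continuous_id.prodMk
      (continuous_streamline_fst hw hm hmw hs))).pow 2).aestronglyMeasurable
  · have hZ := streamline_nonpos (θ := θ) hw hm hmw hs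
    have hwZ := hm.trans_le (hmw θ _ hZ)
    rw [Real.norm_eq_abs, abs_pow, abs_of_pos hwZ]
    exact pow_le_pow_left₀ hwZ.le (hwK θ _ hZ) 2

theorem tendsto_streamlineEnergy_atBot (hw : Continuous ↿w) (hm : 0 < m)
    (hmw : ∀ θ, ∀ Y ≤ 0, m ≤ w θ Y) (hwK : ∀ θ, ∀ Y ≤ 0, w θ Y ≤ K)
    (hlim : ∀ θ, Tendsto (w θ) atBot (𝓝 c)) :
    Tendsto (streamlineEnergy w) atBot (𝓝 (2 * π * c ^ 2)) := by
  have hK : 0 < K := hm.trans_le ((hmw 0 0 le_rfl).trans (hwK 0 0 le_rfl))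
  simpa using tendsto_streamlineEnergy hw hm hmw hwK (eventually_le_atBot 0)
    fun θ => (hlim θ).comp (tendsto_streamline_atBot hw hm hmw hwK hK)

theorem continuousWithinAt_streamlineEnergy (hw : Continuous ↿w) (hm : 0 < m)
    (hmw : ∀ θ, ∀ Y ≤ 0, m ≤ w θ Y) (hwK : ∀ θ, ∀ Y ≤ 0, w θ Y ≤ K) :
    ContinuousWithinAt (streamlineEnergy w) (Iic 0) 0 :=
  tendsto_streamlineEnergy hw hm hmw hwK self_mem_nhdsWithin fun θ =>
    (hw.uncurry_left θ).continuousAt.tendsto.comp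
      ((continuousOn_streamline_snd hw hm hmw) 0 self_mem_Iic)

theorem integral_sq_eq_of_steady_prandtl (hw : Smooth2 w) (hv : Smooth2 v) (hper : Periodic2 w)
    (hdiv : ∀ θ, ∀ Y ≤ 0, pd1 w θ Y + pd2 v θ Y = 0)
    (hmom : ∀ θ, ∀ Y ≤ 0,
      w θ Y * pd1 w θ Y + (v θ Y - v θ 0) * pd2 w θ Y - pd2 (pd2 w) θ Y = 0)
    (hc : 0 < c) (hlim : TendstoUniformly (fun Y θ => w θ Y) (fun _ => c) atBot)
    (hpos : ∀ θ, ∀ Y ≤ 0, 0 < w θ Y) :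
    ∫ θ in (0 : ℝ)..2 * π, w θ 0 ^ 2 = 2 * π * c ^ 2 := by
  obtain ⟨m, hm, K, hmK⟩ := exists_bounds_of_tendstoUniformly hw.continuous hper hc hlim hpos
  have hmw : ∀ θ, ∀ Y ≤ 0, m ≤ w θ Y := fun θ Y hY => (hmK θ Y hY).1
  have hwK : ∀ θ, ∀ Y ≤ 0, w θ Y ≤ K := fun θ Y hY => (hmK θ Y hY).2
  have h := eq_of_tendsto_atBot_of_hasDerivAt_hasDerivAt_zero
    (fun s hs => hasDerivAt_streamlineEnergy hw hm hmw hs)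
    (fun s hs => hasDerivAt_integral_pd2_along_streamline hw hv hper hm hmw hdiv hmom hs)
    (tendsto_streamlineEnergy_atBot hw.continuous hm hmw hwK hlim.tendsto_at)
    ((continuousWithinAt_streamlineEnergy hw.continuous hm hmw hwK).mono Iio_subset_Iic_self)
  simpa [streamlineEnergy, streamline_zero hw.continuous hm hmw] using h

end Energy

theorem batchelor_wood_formula_general (α η c : ℝ)
    (hc : 0 < c) (f : ℝ → ℝ) (hfs : ContDiff ℝ (⊤ : ℕ∞) f)
    (hfmean : (∫ θ in (0:ℝ)..(2 * π), f θ) = 0)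
    (up vp : ℝ → ℝ → ℝ)
    (hups : Smooth2 up) (hvps : Smooth2 vp)
    (hupper : Periodic2 up)
    (heq1 : ∀ θ : ℝ, ∀ Y ≤ (0:ℝ),
      (c + up θ Y) * pd1 up θ Y + (vp θ Y - vp θ 0) * pd2 up θ Y
        - pd2 (pd2 up) θ Y = 0)
    (heq2 : ∀ θ : ℝ, ∀ Y ≤ (0:ℝ), pd1 up θ Y + pd2 vp θ Y = 0)
    (hbc : ∀ θ : ℝ, up θ 0 = α + η * f θ - c)
    (hlim : ∀ δ > (0:ℝ), ∃ Y₀ : ℝ, ∀ θ : ℝ, ∀ Y ≤ Y₀,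
      |up θ Y| < δ ∧ |vp θ Y| < δ)
    (hpos : ∀ θ : ℝ, ∀ Y ≤ (0:ℝ), 0 < c + up θ Y) :
    c ^ 2 = α ^ 2 + η ^ 2 / (2 * π) * ∫ θ in (0:ℝ)..(2 * π), (f θ) ^ 2 := by
  have hlim' : TendstoUniformly (fun Y θ => c + up θ Y) (fun _ => c) atBot :=
    tendstoUniformly_iff.mpr fun ε hε => eventually_atBot.mpr <| (hlim ε hε).imp
      fun _ hY Y hYY₀ θ => by simpa [Real.dist_eq] using (hY θ Y hYY₀).1
  have key := integral_sq_eq_of_steady_prandtl (hups.const_add c) hvps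
    (fun θ Y => by simp only [hupper θ Y]) (by simpa only [pd1_const_add] using heq2)
    (by simpa only [pd1_const_add, pd2_const_add] using heq1) hc hlim' hpos
  simp only [hbc, add_sub_cancel, integral_const_add_mul_sq hfs.continuous, hfmean] at key
  field_simp
  linarith

/-- **Batchelor–Wood formula.** If the steady Prandtl system on the half-strip
`ℝ × (-∞,0]` with boundary data `α + η f(θ) - c` has a smooth `2π`-periodic solution
`(u_p, v_p)` tending uniformly to `(0,0)` as `Y → -∞`, with `c + u_p > 0` and `u_p`
bounded by `M`, then `c² = α² + (η²/2π) ∫₀^{2π} f(θ)² dθ`. -/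
theorem batchelor_wood_formula (α η M c : ℝ) (hα : 0 < α) (hη : 0 < η) (hM : 0 < M)
    (hc : 0 < c) (f : ℝ → ℝ) (hfs : ContDiff ℝ (⊤ : ℕ∞) f)
    (hfper : ∀ θ, f (θ + 2 * π) = f θ)
    (hfmean : (∫ θ in (0:ℝ)..(2 * π), f θ) = 0)
    (up vp : ℝ → ℝ → ℝ)
    (hups : Smooth2 up) (hvps : Smooth2 vp)
    (hupper : Periodic2 up) (hvpper : Periodic2 vp)
    (heq1 : ∀ θ : ℝ, ∀ Y ≤ (0:ℝ),
      (c + up θ Y) * pd1 up θ Y + (vp θ Y - vp θ 0) * pd2 up θ Y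
        - pd2 (pd2 up) θ Y = 0)
    (heq2 : ∀ θ : ℝ, ∀ Y ≤ (0:ℝ), pd1 up θ Y + pd2 vp θ Y = 0)
    (hbc : ∀ θ : ℝ, up θ 0 = α + η * f θ - c)
    (hlim : ∀ δ > (0:ℝ), ∃ Y₀ : ℝ, ∀ θ : ℝ, ∀ Y ≤ Y₀,
      |up θ Y| < δ ∧ |vp θ Y| < δ)
    (hpos : ∀ θ : ℝ, ∀ Y ≤ (0:ℝ), 0 < c + up θ Y)
    (hbd : ∀ θ : ℝ, ∀ Y ≤ (0:ℝ), |up θ Y| ≤ M) :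
    c ^ 2 = α ^ 2 + η ^ 2 / (2 * π) * ∫ θ in (0:ℝ)..(2 * π), (f θ) ^ 2 :=
  batchelor_wood_formula_general α η c hc f hfs hfmean up vp hups hvps hupper heq1 heq2 hbc hlim
    hpos

end
end

section
/- Let a ∈ ℝ and let u : ℝ² → ℝ² be a vector field that is continuous on the closed unit disk {(x,y) : x² + y² ≤ 1} and continuously differentiable on the open unit disk, such that: u is divergence-free (∂_x u₁ + ∂_y u₂ = 0 on the open disk), u has constant vorticity a (∂_x u₂ − ∂_y u₁ = a on the open disk), and u is tangent to the boundary (u(x,y)·(x,y) = 0 whenever x² + y² = 1). Then u(x,y) = (a/2)(−y, x) for all (x,y) in the closed unit disk; i.e., u is the rigid rotation of angular velocity a/2. -/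
/-!
Subtracting the rotation of angular velocity `a / 2` leaves a field `v` that is divergence-free and
irrotational, so by the Cauchy–Riemann equations its complex velocity `F = v₁ - i v₂` is
holomorphic. Tangency says that `Re (z F z) = x v₁ + y v₂` vanishes on the unit circle; the maximum
principle for `exp (± z F z)` makes it vanish on the whole disk, so `z F z` is constant by the open
mapping theorem, hence equal to its value `0` at the origin. Therefore `F = 0`.
-/

open Complex Metric Set Topology

namespace Complex

theorem re_sq_add_im_sq (z : ℂ) : z.re ^ 2 + z.im ^ 2 = ‖z‖ ^ 2 := by
  rw [Complex.sq_norm, normSq_apply]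
  ring

theorem mem_ball_zero_one_iff {z : ℂ} : z ∈ ball (0 : ℂ) 1 ↔ z.re ^ 2 + z.im ^ 2 < 1 := by
  rw [mem_ball_zero_iff, re_sq_add_im_sq, sq_lt_one_iff₀ (norm_nonneg z)]

theorem mem_closedBall_zero_one_iff {z : ℂ} :
    z ∈ closedBall (0 : ℂ) 1 ↔ z.re ^ 2 + z.im ^ 2 ≤ 1 := by
  rw [mem_closedBall_zero_iff, re_sq_add_im_sq, sq_le_one_iff₀ (norm_nonneg z)]

theorem mem_sphere_zero_one_iff {z : ℂ} : z ∈ sphere (0 : ℂ) 1 ↔ z.re ^ 2 + z.im ^ 2 = 1 := by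
  rw [mem_sphere_zero_iff_norm, re_sq_add_im_sq,
    pow_eq_one_iff_of_nonneg (norm_nonneg z) two_ne_zero]

variable {E : Type*} [NormedAddCommGroup E] [NormedSpace ℂ E] [Nontrivial E]

theorem re_le_of_forall_mem_frontier_re_le {g : E → ℂ} {U : Set E} (hU : Bornology.IsBounded U)
    (hg : DiffContOnCl ℂ g U) {C : ℝ} (hC : ∀ z ∈ frontier U, (g z).re ≤ C) {z : E}
    (hz : z ∈ closure U) : (g z).re ≤ C := by
  have hexp : DiffContOnCl ℂ (fun w => exp (g w)) U :=
    ⟨hg.differentiableOn.cexp, continuous_exp.comp_continuousOn hg.continuousOn⟩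
  have := norm_le_of_forall_mem_frontier_norm_le hU hexp (C := Real.exp C)
    (fun w hw => by simpa [norm_exp] using hC w hw) hz
  simpa [norm_exp] using this

theorem eqOn_const_of_forall_re_eq {g : ℂ → ℂ} {U : Set ℂ} (hg : DifferentiableOn ℂ g U)
    (hU : IsOpen U) (hUc : IsPreconnected U) {c : ℝ} (hre : ∀ z ∈ U, (g z).re = c) {z₀ : ℂ}
    (hz₀ : z₀ ∈ U) : EqOn g (fun _ => g z₀) U := by
  rcases (hg.analyticOnNhd hU).is_constant_or_isOpen hUc with ⟨w, hw⟩ | hopen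
  · intro z hz
    simp only [hw z hz, hw z₀ hz₀]
  · have himage : g '' U ⊆ interior (re ⁻¹' {c}) :=
      (hopen U subset_rfl hU).subset_interior_iff.2 (image_subset_iff.2 hre)
    rw [interior_preimage_re, interior_singleton] at himage
    exact absurd (himage (mem_image_of_mem g hz₀)) (notMem_empty _)

theorem eq_zero_on_closedBall_of_re_mul_eq_zero_on_sphere {F : ℂ → ℂ}
    (hF : DiffContOnCl ℂ F (ball 0 1)) (hre : ∀ z ∈ sphere (0 : ℂ) 1, (z * F z).re = 0) :
    ∀ z ∈ closedBall (0 : ℂ) 1, F z = 0 := by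
  set g : ℂ → ℂ := fun z => z * F z
  have hg : DiffContOnCl ℂ g (ball 0 1) :=
    ⟨differentiableOn_id.mul hF.differentiableOn, continuousOn_id.mul hF.continuousOn⟩
  have hg_re : ∀ z ∈ closedBall (0 : ℂ) 1, (g z).re = 0 := by
    rw [← closure_ball 0 one_ne_zero]
    intro z hz
    have hle := re_le_of_forall_mem_frontier_re_le isBounded_ball hg
      (fun w hw => (hre w (frontier_ball_subset_sphere hw)).le) hz
    have hge := re_le_of_forall_mem_frontier_re_le isBounded_ball hg.neg (C := 0)
      (fun w hw => by simp [g, hre w (frontier_ball_subset_sphere hw)]) hz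
    simp only [Pi.neg_apply, neg_re] at hge
    linarith
  have hg_zero : EqOn g (fun _ => 0) (closedBall 0 1) := by
    have hball : EqOn g (fun _ => 0) (ball 0 1) := by
      simpa [g] using eqOn_const_of_forall_re_eq hg.differentiableOn isOpen_ball
        (convex_ball 0 1).isPreconnected (fun z hz => hg_re z (ball_subset_closedBall hz))
        (mem_ball_self one_pos)
    exact hball.of_subset_closure hg.continuousOn_ball continuousOn_const ball_subset_closedBall
      (closure_ball 0 one_ne_zero).ge
  have hF_punctured : ∀ z ∈ closedBall (0 : ℂ) 1, z ≠ 0 → F z = 0 := fun z hz hz0 =>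
    (mul_eq_zero.1 (hg_zero hz)).resolve_left hz0
  intro z hz
  rcases eq_or_ne z 0 with rfl | hz0
  · have hnear : F =ᶠ[𝓝[≠] 0] fun _ => 0 := by
      filter_upwards [self_mem_nhdsWithin, nhdsWithin_le_nhds (closedBall_mem_nhds 0 one_pos)]
        with w hw0 hw using hF_punctured w hw hw0
    exact ((hF.differentiableAt isOpen_ball (mem_ball_self one_pos)).continuousAt
      |>.eventuallyEq_nhds_iff_eventuallyEq_nhdsNE continuousAt_const).1 hnear |>.eq_of_nhds
  · exact hF_punctured z hz hz0

end Complex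

noncomputable section PlanarVectorField

def divergence (v : ℝ × ℝ → ℝ × ℝ) (p : ℝ × ℝ) : ℝ :=
  (fderiv ℝ v p (1, 0)).1 + (fderiv ℝ v p (0, 1)).2

def vorticity (v : ℝ × ℝ → ℝ × ℝ) (p : ℝ × ℝ) : ℝ :=
  (fderiv ℝ v p (1, 0)).2 - (fderiv ℝ v p (0, 1)).1

def rigidRotation (ω : ℝ) : ℝ × ℝ →L[ℝ] ℝ × ℝ :=
  ω • (-ContinuousLinearMap.snd ℝ ℝ ℝ).prod (ContinuousLinearMap.fst ℝ ℝ ℝ)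

@[simp]
theorem rigidRotation_apply (ω : ℝ) (p : ℝ × ℝ) : rigidRotation ω p = (ω * -p.2, ω * p.1) := by
  simp [rigidRotation]

variable {v : ℝ × ℝ → ℝ × ℝ} {p : ℝ × ℝ}

theorem divergence_sub_rigidRotation (hv : DifferentiableAt ℝ v p) (ω : ℝ) :
    divergence (v - rigidRotation ω) p = divergence v p := by
  simp [divergence, fderiv_sub hv (rigidRotation ω).differentiableAt]

theorem vorticity_sub_rigidRotation (hv : DifferentiableAt ℝ v p) (ω : ℝ) :
    vorticity (v - rigidRotation ω) p = vorticity v p - 2 * ω := by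
  simp only [vorticity, fderiv_sub hv (rigidRotation ω).differentiableAt,
    ContinuousLinearMap.fderiv, sub_apply, rigidRotation_apply, Prod.fst_sub,
    Prod.snd_sub]
  ring

end PlanarVectorField

noncomputable section ComplexVelocity

def complexVelocity (v : ℝ × ℝ → ℝ × ℝ) (z : ℂ) : ℂ :=
  ⟨(v (z.re, z.im)).1, -(v (z.re, z.im)).2⟩

variable {v : ℝ × ℝ → ℝ × ℝ}

theorem complexVelocity_eq_zero_iff {z : ℂ} :
    complexVelocity v z = 0 ↔ v (z.re, z.im) = 0 := by
  simp [complexVelocity, Complex.ext_iff, Prod.ext_iff]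

theorem re_mul_complexVelocity (z : ℂ) :
    (z * complexVelocity v z).re = (v (z.re, z.im)).1 * z.re + (v (z.re, z.im)).2 * z.im := by
  simp only [complexVelocity, mul_re]
  ring

theorem complexVelocity_eq_comp :
    complexVelocity v = conjCLE ∘ equivRealProdCLM.symm ∘ v ∘ equivRealProdCLM := by
  funext w
  apply Complex.ext <;> simp [complexVelocity]

theorem continuousOn_complexVelocity {s : Set (ℝ × ℝ)} (hv : ContinuousOn v s) :
    ContinuousOn (complexVelocity v) (equivRealProd ⁻¹' s) := by
  rw [complexVelocity_eq_comp]
  exact conjCLE.continuous.comp_continuousOn (equivRealProdCLM.symm.continuous.comp_continuousOn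
    (hv.comp equivRealProdCLM.continuous.continuousOn (mapsTo_preimage _ _)))

/-- The Cauchy–Riemann equations for `v₁ - i v₂` are `divergence v = 0` and `vorticity v = 0`. -/
theorem differentiableAt_complexVelocity {z : ℂ} (hv : DifferentiableAt ℝ v (z.re, z.im))
    (hdiv : divergence v (z.re, z.im) = 0) (hvort : vorticity v (z.re, z.im) = 0) :
    DifferentiableAt ℂ (complexVelocity v) z := by
  have hF : HasFDerivAt (complexVelocity v) ((conjCLE : ℂ →L[ℝ] ℂ).comp
      ((equivRealProdCLM.symm : ℝ × ℝ →L[ℝ] ℂ).comp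
        ((fderiv ℝ v (z.re, z.im)).comp equivRealProdCLM.toContinuousLinearMap))) z := by
    rw [complexVelocity_eq_comp]
    exact conjCLE.hasFDerivAt.comp z (equivRealProdCLM.symm.hasFDerivAt.comp z
      (hv.hasFDerivAt.comp z equivRealProdCLM.hasFDerivAt))
  refine (hF.complexOfReal_hasFDerivAt ?_).differentiableAt
  rw [divergence] at hdiv
  rw [vorticity] at hvort
  apply Complex.ext <;>
    simp only [ContinuousLinearMap.comp_apply, ContinuousLinearEquiv.coe_coe,
      equivRealProdCLM_apply, ContinuousAlgEquiv.coeCLE_apply, conjCAE_apply, conj_re, conj_im,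
      equivRealProdCLM_symm_apply_re, equivRealProdCLM_symm_apply_im, I_re, I_im, one_re, one_im,
      smul_eq_mul, mul_re, mul_im, zero_mul, one_mul, mul_neg, neg_zero, sub_neg_eq_add,
      zero_add] <;>
    linarith

end ComplexVelocity

/-- The only steady incompressible flow on the closed unit disk with constant vorticity `a`
and no flow through the boundary is the rigid rotation `u(x,y) = (a/2)(-y, x)`. -/
theorem constant_vorticity_rigid_rotation (a : ℝ) (u : ℝ × ℝ → ℝ × ℝ)
    (hc : ContinuousOn u {p : ℝ × ℝ | p.1 ^ 2 + p.2 ^ 2 ≤ 1})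
    (hd : ContDiffOn ℝ 1 u {p : ℝ × ℝ | p.1 ^ 2 + p.2 ^ 2 < 1})
    (hdiv : ∀ p ∈ {p : ℝ × ℝ | p.1 ^ 2 + p.2 ^ 2 < 1},
      (fderiv ℝ u p (1, 0)).1 + (fderiv ℝ u p (0, 1)).2 = 0)
    (hvort : ∀ p ∈ {p : ℝ × ℝ | p.1 ^ 2 + p.2 ^ 2 < 1},
      (fderiv ℝ u p (1, 0)).2 - (fderiv ℝ u p (0, 1)).1 = a)
    (htan : ∀ p : ℝ × ℝ, p.1 ^ 2 + p.2 ^ 2 = 1 →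
      (u p).1 * p.1 + (u p).2 * p.2 = 0) :
    ∀ p ∈ {p : ℝ × ℝ | p.1 ^ 2 + p.2 ^ 2 ≤ 1},
      u p = (a / 2 * (-p.2), a / 2 * p.1) := by
  set v : ℝ × ℝ → ℝ × ℝ := u - rigidRotation (a / 2)
  have hu : ∀ z ∈ ball (0 : ℂ) 1, DifferentiableAt ℝ u (z.re, z.im) := fun z hz =>
    (hd.differentiableOn one_ne_zero _ (mem_ball_zero_one_iff.1 hz)).differentiableAt
      ((isOpen_lt (by fun_prop) continuous_const).mem_nhds (mem_ball_zero_one_iff.1 hz))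
  have hF : DiffContOnCl ℂ (complexVelocity v) (ball 0 1) := by
    refine ⟨fun z hz => (differentiableAt_complexVelocity
      ((hu z hz).sub (rigidRotation _).differentiableAt) ?_ ?_).differentiableWithinAt, ?_⟩
    · rw [divergence_sub_rigidRotation (hu z hz)]
      exact hdiv _ (mem_ball_zero_one_iff.1 hz)
    · rw [vorticity_sub_rigidRotation (hu z hz), vorticity, hvort _ (mem_ball_zero_one_iff.1 hz)]
      ring
    · rw [closure_ball 0 one_ne_zero]
      convert continuousOn_complexVelocity (hc.sub (rigidRotation (a / 2)).continuous.continuousOn)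
      ext z
      exact mem_closedBall_zero_one_iff
  have hF_zero := eq_zero_on_closedBall_of_re_mul_eq_zero_on_sphere hF fun z hz => by
    rw [re_mul_complexVelocity]
    simp only [v, Pi.sub_apply, Prod.fst_sub, Prod.snd_sub, rigidRotation_apply]
    linear_combination htan (z.re, z.im) (mem_sphere_zero_one_iff.1 hz)
  intro p hp
  simpa [v, sub_eq_zero] using
    complexVelocity_eq_zero_iff.1 (hF_zero ⟨p.1, p.2⟩ (mem_closedBall_zero_one_iff.2 hp))
end
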